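/- arXiv:2007.03249 — 3 statements merged into one kernel-verified Lean document; each statement's English description precedes it below -/
import Mathlib

section
/- A sequence α ∈ {0,1}^ω is Bernoulli-normal if and only if it is Postnikov-admissible. -/
open Filter

/-- `α` is Bernoulli-normal (p-distributed): every nonempty finite word `w` occurs as a factor
of `α` with limiting frequency `μ_p(w) = p ^ (number of ones) * (1-p) ^ (number of zeros)`. -/
def BernoulliNormal (p : ℝ) (α : ℕ → Bool) : Prop :=
  ∀ w : List Bool, 1 ≤ w.length →
    Tendsto (fun N : ℕ =>
      (((Finset.range N).filter fun i =>
        ∀ j : Fin w.length, α (i + (j : ℕ)) = w.get j).card : ℝ) / N)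
      atTop (nhds ((w.map fun a => if a then p else 1 - p).prod))

/-- `α` is admissible in the sense of Postnikov: for every `m ≥ 1` and every nonempty set of
positions `R ⊆ {0, …, m-1}`, the limiting frequency (over `n`) of having a `1` at all the
positions of `R` in the `n`-th block `α (n*m), …, α (n*m + m - 1)` exists and equals
`p ^ R.card`. -/
def PostnikovAdmissible (p : ℝ) (α : ℕ → Bool) : Prop :=
  ∀ m : ℕ, 1 ≤ m → ∀ R : Finset (Fin m), R.Nonempty →
    Tendsto (fun N : ℕ =>
      (((Finset.range N).filter fun n => ∀ i ∈ R, α (n * m + (i : ℕ)) = true).card : ℝ) / N)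
      atTop (nhds (p ^ R.card))

/-!
Both directions compare occurrences of words at all positions with occurrences along the
progressions `n * m + q`.

Admissible ⇒ normal: inside blocks of length `m`, inclusion–exclusion over the zeros of a word
turns the densities `p ^ #S` of "all ones on `S`" into the density `μ_p(v)` of the word `v` at
any fixed offset. A word of length `L` starting anywhere starts at some offset `q` of its block,
and all offsets but `L` of them keep it inside the block; as `m → ∞` this gives density `μ_p(v)`.

Normal ⇒ admissible: group `T` consecutive blocks of length `m` into windows of length `T * m`.
Up to an error `T`, the number of blocks that are all ones on `R` is the sum, over the aligned
windows, of the fraction of their `T` blocks with this property. By normality the windows are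
distributed according to `μ_p`, under which the `T` blocks are independent, so this fraction has
mean `p ^ #R` and variance at most `1 / T`; letting `T → ∞` gives density `p ^ #R`.
-/

open Finset Function Topology

section NatDensity

variable {P : ℕ → Prop} [DecidablePred P] {d : ℝ}

def HasNatDensity (P : ℕ → Prop) [DecidablePred P] (d : ℝ) : Prop :=
  Tendsto (fun N : ℕ => (Nat.count P N : ℝ) / N) atTop (𝓝 d)

theorem HasNatDensity.nonneg (h : HasNatDensity P d) : 0 ≤ d :=
  ge_of_tendsto' h fun _ => by positivity

theorem HasNatDensity.le_one (h : HasNatDensity P d) : d ≤ 1 :=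
  le_of_tendsto' h fun _ => div_le_one_of_le₀ (mod_cast Nat.count_le P) (by positivity)

theorem hasNatDensity_of_forall (hP : ∀ n, P n) : HasNatDensity P 1 := by
  refine tendsto_const_nhds.congr' ?_
  filter_upwards [eventually_gt_atTop 0] with N hN
  rw [Nat.count_eq_card_filter_range, filter_true_of_mem fun n _ => hP n, card_range,
    div_self (by positivity)]

theorem HasNatDensity.tendsto_count_comp (h : HasNatDensity P d) {g : ℕ → ℕ} {a : ℝ}
    (hg : Tendsto g atTop atTop) (hga : Tendsto (fun N => (g N : ℝ) / N) atTop (𝓝 a)) :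
    Tendsto (fun N => (Nat.count P (g N) : ℝ) / N) atTop (𝓝 (d * a)) := by
  refine ((h.comp hg).mul hga).congr' ?_
  filter_upwards [hg.eventually_gt_atTop 0] with N hN
  exact div_mul_div_cancel₀ (by positivity)

theorem tendsto_natCast_div_div_atTop {m : ℕ} (hm : m ≠ 0) :
    Tendsto (fun N : ℕ => ((N / m : ℕ) : ℝ) / N) atTop (𝓝 (1 / m)) := by
  have := (tendsto_nat_floor_mul_div_atTop (R := ℝ) (a := 1 / m) (by positivity)).comp
    tendsto_natCast_atTop_atTop
  refine this.congr fun N => ?_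
  rw [Function.comp_apply, one_div_mul_eq_div, Nat.floor_div_eq_div]

theorem tendsto_natCast_div_add_one_div_atTop {m : ℕ} (hm : m ≠ 0) :
    Tendsto (fun N : ℕ => ((N / m + 1 : ℕ) : ℝ) / N) atTop (𝓝 (1 / m)) := by
  simpa [add_div] using (tendsto_natCast_div_div_atTop hm).add tendsto_one_div_atTop_nhds_zero_nat

theorem HasNatDensity.tendsto_count_div_div (h : HasNatDensity P d) {m : ℕ} (hm : m ≠ 0) :
    Tendsto (fun N => (Nat.count P (N / m) : ℝ) / N) atTop (𝓝 (d / m)) := by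
  simpa [div_eq_mul_one_div d] using
    h.tendsto_count_comp (Nat.tendsto_div_const_atTop hm) (tendsto_natCast_div_div_atTop hm)

theorem HasNatDensity.tendsto_count_div_add_one_div (h : HasNatDensity P d) {m : ℕ} (hm : m ≠ 0) :
    Tendsto (fun N => (Nat.count P (N / m + 1) : ℝ) / N) atTop (𝓝 (d / m)) := by
  simpa [div_eq_mul_one_div d] using
    h.tendsto_count_comp (tendsto_atTop_mono (fun _ => Nat.le_succ _)
      (Nat.tendsto_div_const_atTop hm)) (tendsto_natCast_div_add_one_div_atTop hm)

theorem tendsto_natCast_mul_div_atTop (m : ℕ) :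
    Tendsto (fun N : ℕ => ((N * m : ℕ) : ℝ) / N) atTop (𝓝 m) := by
  refine tendsto_const_nhds.congr' ?_
  filter_upwards [eventually_gt_atTop 0] with N hN
  push_cast
  field_simp

end NatDensity

theorem tendsto_of_forall_sandwich {ι : Type*} {l : Filter ι} {f : ι → ℝ} {c : ℝ}
    (h : ∀ ε > 0, ∃ (g u : ι → ℝ) (a b : ℝ), Tendsto g l (𝓝 a) ∧ Tendsto u l (𝓝 b) ∧
      c - ε < a ∧ b < c + ε ∧ ∀ᶠ x in l, g x ≤ f x ∧ f x ≤ u x) :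
    Tendsto f l (𝓝 c) := by
  rw [tendsto_order]
  constructor
  · intro a' ha'
    obtain ⟨g, _, a, _, hg, _, ha, _, hgf⟩ := h (c - a') (by linarith)
    filter_upwards [hg.eventually_const_lt (by linarith : a' < a), hgf] with x h₁ h₂
    linarith [h₂.1]
  · intro b' hb'
    obtain ⟨_, u, _, b, _, hu, _, hb, hfu⟩ := h (b' - c) (by linarith)
    filter_upwards [hu.eventually_lt_const (by linarith : b < b'), hfu] with x h₁ h₂
    linarith [h₂.2]

section Residues

variable (P : ℕ → Prop) [DecidablePred P]

theorem Nat.count_mul_eq_sum_count_mul_add (K m : ℕ) :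
    Nat.count P (K * m) = ∑ q ∈ range m, Nat.count (fun n => P (n * m + q)) K := by
  induction K with
  | zero => simp
  | succ K ih =>
    simp only [Nat.count_succ, sum_add_distrib, ← ih, add_mul, one_mul, Nat.count_add,
      Nat.count_eq_card_filter_range (fun k => P (K * m + k)), card_filter]

theorem Nat.sum_count_mul_add_le_count (m s N : ℕ) :
    ∑ q ∈ range (m - s), Nat.count (fun n => P (n * m + q)) (N / m) ≤ Nat.count P N :=
  calc _ ≤ ∑ q ∈ range m, Nat.count (fun n => P (n * m + q)) (N / m) :=
        sum_le_sum_of_subset (range_subset_range.2 (Nat.sub_le m s))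
    _ = Nat.count P (N / m * m) := (Nat.count_mul_eq_sum_count_mul_add P _ _).symm
    _ ≤ Nat.count P N := Nat.count_monotone P (Nat.div_mul_le_self N m)

theorem Nat.count_le_sum_count_mul_add (m s N : ℕ) (hsm : s < m) :
    Nat.count P N ≤
      ∑ q ∈ range (m - s), Nat.count (fun n => P (n * m + q)) (N / m + 1) + s * (N / m + 1) :=
  calc Nat.count P N ≤ Nat.count P ((N / m + 1) * m) :=
        Nat.count_monotone P (by rw [mul_comm]; exact (Nat.lt_mul_div_succ N (by omega)).le)
    _ = ∑ q ∈ range (m - s), Nat.count (fun n => P (n * m + q)) (N / m + 1) +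
        ∑ q ∈ Ico (m - s) m, Nat.count (fun n => P (n * m + q)) (N / m + 1) := by
      rw [Nat.count_mul_eq_sum_count_mul_add, sum_range_add_sum_Ico _ (Nat.sub_le m s)]
    _ ≤ _ := by
      gcongr
      refine (sum_le_card_nsmul _ _ _ fun q _ => Nat.count_le _).trans_eq ?_
      rw [Nat.card_Ico, smul_eq_mul, Nat.sub_sub_self hsm.le]

theorem Nat.count_comp_mul_le_count_mul {m : ℕ} (hm : 0 < m) (N : ℕ) :
    Nat.count (fun n => P (n * m)) N ≤ Nat.count P (N * m) :=
  calc Nat.count (fun n => P (n * m + 0)) N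
      ≤ ∑ q ∈ range m, Nat.count (fun n => P (n * m + q)) N :=
        single_le_sum (f := fun q => Nat.count (fun n => P (n * m + q)) N)
          (fun _ _ => Nat.zero_le _) (mem_range.2 hm)
    _ = Nat.count P (N * m) := (Nat.count_mul_eq_sum_count_mul_add _ _ _).symm

end Residues

/-- Only the residues `q` with `q + s < m` are controlled; the `s` others carry a share at most
`s / m` of the positions, which vanishes as `m → ∞`. -/
theorem hasNatDensity_of_hasNatDensity_mul_add {P : ℕ → Prop} [DecidablePred P] {d : ℝ} (s : ℕ)
    (h : ∀ m q, q + s < m → HasNatDensity (fun n => P (n * m + q)) d) :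
    HasNatDensity P d := by
  have hd0 : 0 ≤ d := (h (s + 1) 0 (by omega)).nonneg
  have hd1 : d ≤ 1 := (h (s + 1) 0 (by omega)).le_one
  refine tendsto_of_forall_sandwich fun ε hε => ?_
  obtain ⟨m, hsε, hsm⟩ : ∃ m : ℕ, (s : ℝ) / m < ε ∧ s < m :=
    (((tendsto_const_div_atTop_nhds_zero_nat (s : ℝ)).eventually (gt_mem_nhds hε)).and
      (eventually_gt_atTop s)).exists
  have hm : m ≠ 0 := by omega
  have hres : ∀ q ∈ range (m - s), HasNatDensity (fun n => P (n * m + q)) d :=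
    fun q hq => h m q (by rw [mem_range] at hq; omega)
  have hcard : ((m - s : ℕ) : ℝ) = m - s := Nat.cast_sub hsm.le
  have hlow : Tendsto (fun N =>
        ∑ q ∈ range (m - s), (Nat.count (fun n => P (n * m + q)) (N / m) : ℝ) / N)
      atTop (𝓝 ((m - s) * (d / m))) := by
    simpa [hcard] using tendsto_finsetSum _ fun q hq => (hres q hq).tendsto_count_div_div hm
  have hup : Tendsto (fun N => ∑ q ∈ range (m - s),
        (Nat.count (fun n => P (n * m + q)) (N / m + 1) : ℝ) / N + s * (((N / m + 1 : ℕ) : ℝ) / N))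
      atTop (𝓝 ((m - s) * (d / m) + s * (1 / m))) := by
    simpa [hcard] using (tendsto_finsetSum _ fun q hq =>
      (hres q hq).tendsto_count_div_add_one_div hm).add
        ((tendsto_natCast_div_add_one_div_atTop hm).const_mul (s : ℝ))
  have hmean : ((m : ℝ) - s) * (d / m) = d - s * (d / m) := by field_simp
  have hsd : (s : ℝ) * (d / m) ≤ s * (1 / m) := by gcongr
  rw [mul_one_div] at hsd
  have hsd0 : 0 ≤ (s : ℝ) * (d / m) := by positivity
  refine ⟨_, _, _, _, hlow, hup, ?_, ?_, Eventually.of_forall fun N => ⟨?_, ?_⟩⟩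
  · rw [hmean]
    linarith
  · rw [hmean, mul_one_div]
    linarith
  · rw [← sum_div]
    gcongr
    exact_mod_cast Nat.sum_count_mul_add_le_count P m s N
  · rw [← sum_div, ← mul_div_assoc, ← add_div]
    gcongr
    exact_mod_cast Nat.count_le_sum_count_mul_add P m s N hsm

def window (α : ℕ → Bool) (L i : ℕ) : Fin L → Bool := fun j => α (i + j)

section WordWeight

variable {ι : Type*} [Fintype ι] {p : ℝ}

def wordWeight (p : ℝ) (w : ι → Bool) : ℝ := ∏ i, if w i then p else 1 - p

def onesIndicator (S : Finset ι) (w : ι → Bool) : ℝ := if ∀ i ∈ S, w i = true then 1 else 0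

theorem wordWeight_nonneg (hp0 : 0 ≤ p) (hp1 : p ≤ 1) (w : ι → Bool) : 0 ≤ wordWeight p w :=
  prod_nonneg fun i _ => by split <;> linarith

variable [DecidableEq ι]

theorem onesIndicator_mul_onesIndicator (S S' : Finset ι) (w : ι → Bool) :
    onesIndicator S w * onesIndicator S' w = onesIndicator (S ∪ S') w := by
  simp only [onesIndicator, ite_zero_mul_ite_zero, one_mul, forall_mem_union]

theorem sum_wordWeight_mul_prod (g : ι → Bool → ℝ) :
    ∑ w : ι → Bool, wordWeight p w * ∏ i, g i (w i) =
      ∏ i, (p * g i true + (1 - p) * g i false) := by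
  have h := Fintype.prod_sum fun i (b : Bool) => (if b then p else 1 - p) * g i b
  simp only [Fintype.sum_bool, if_true, Bool.false_eq_true, if_false] at h
  simp only [h, wordWeight, prod_mul_distrib]

theorem sum_wordWeight_mul_onesIndicator (S : Finset ι) :
    ∑ w : ι → Bool, wordWeight p w * onesIndicator S w = p ^ S.card := by
  have h : ∀ w : ι → Bool,
      onesIndicator S w = ∏ i, if i ∈ S then (if w i then 1 else 0) else 1 := fun w => by
    rw [prod_ite_mem, univ_inter, prod_boole, onesIndicator]
  simp only [h]
  rw [sum_wordWeight_mul_prod fun i b => if i ∈ S then (if b then 1 else 0) else 1]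
  simp [apply_ite, prod_ite_mem]

theorem sum_wordWeight : ∑ w : ι → Bool, wordWeight p w = 1 := by
  simpa [onesIndicator] using sum_wordWeight_mul_onesIndicator (p := p) (∅ : Finset ι)

end WordWeight

section InclusionExclusion

variable {ι : Type*} [Fintype ι] [DecidableEq ι] {p : ℝ}

theorem ite_eq_eq_sum_powerset (x v : ι → Bool) :
    (if x = v then 1 else 0 : ℝ) =
      ∑ T ∈ ({i | v i = false} : Finset ι).powerset,
        (-1) ^ T.card * onesIndicator (({i | v i = true} : Finset ι) ∪ T) x := by
  set O : Finset ι := {i | v i = true}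
  set Z : Finset ι := {i | v i = false}
  set a : ι → ℝ := fun i => if x i then 1 else 0
  have hprod : (if x = v then 1 else 0 : ℝ) = (∏ i ∈ O, a i) * ∏ i ∈ Z, (-a i + 1) := by
    have hcoord : (if x = v then 1 else 0 : ℝ) = ∏ i, if v i then a i else -a i + 1 := by
      rw [← prod_congr rfl fun i _ => (?_ : (if x i = v i then 1 else 0 : ℝ) = _), prod_boole]
      · simp [funext_iff]
      · cases hx : x i <;> cases hv : v i <;> simp [a, hx]
    simp only [hcoord, prod_ite, O, Z, Bool.not_eq_true]
  rw [hprod, prod_add, mul_sum]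
  refine sum_congr rfl fun T hT => ?_
  have hOT : Disjoint O T := disjoint_left.2 fun i hiO hiT => by
    have := (mem_filter.1 (mem_powerset.1 hT hiT)).2
    simp_all [O]
  rw [prod_neg, prod_const_one, mul_one, onesIndicator, ← prod_boole, prod_union hOT]
  ring

theorem hasNatDensity_eq_wordWeight (X : ℕ → ι → Bool)
    (h : ∀ S : Finset ι, HasNatDensity (fun n => ∀ i ∈ S, X n i = true) (p ^ S.card))
    (v : ι → Bool) : HasNatDensity (fun n => X n = v) (wordWeight p v) := by
  set O : Finset ι := {i | v i = true}
  set Z : Finset ι := {i | v i = false}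
  have hcount : ∀ N, (Nat.count (fun n => X n = v) N : ℝ) =
      ∑ T ∈ Z.powerset, (-1) ^ T.card *
        (Nat.count (fun n => ∀ i ∈ O ∪ T, X n i = true) N : ℝ) := fun N => by
    simp only [O, Z, Nat.count_eq_card_filter_range, natCast_card_filter,
      ite_eq_eq_sum_powerset (X _) v, onesIndicator, mul_sum]
    rw [sum_comm]
    -- the two sides differ only in their `Decidable` instances
    congr!
  have hweight : wordWeight p v = ∑ T ∈ Z.powerset, (-1) ^ T.card * p ^ (O ∪ T).card := by
    calc wordWeight p v = ∑ x, wordWeight p x * (if x = v then 1 else 0) := by simp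
      _ = ∑ T ∈ Z.powerset, (-1) ^ T.card * ∑ x, wordWeight p x * onesIndicator (O ∪ T) x := by
        simp only [O, Z, ite_eq_eq_sum_powerset, mul_sum]
        rw [sum_comm]
        simp only [mul_left_comm]
      _ = _ := by simp only [sum_wordWeight_mul_onesIndicator]
  rw [HasNatDensity, hweight]
  simp only [hcount, sum_div, mul_div_assoc]
  exact tendsto_finsetSum _ fun T _ => (h _).const_mul _

end InclusionExclusion

section Bridges

variable {p : ℝ} {α : ℕ → Bool}

theorem bernoulliNormal_iff :
    BernoulliNormal p α ↔ ∀ L, 1 ≤ L → ∀ w : Fin L → Bool,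
      HasNatDensity (fun i => window α L i = w) (wordWeight p w) := by
  constructor
  · intro h L hL w
    -- `List.ofFn w` has length `L` only propositionally, so generalize over that equation.
    suffices ∀ u : List Bool, (hu : u.length = L) →
        HasNatDensity (fun i => window α L i = fun j : Fin L => u.get (j.cast hu.symm))
          (wordWeight p fun j : Fin L => u.get (j.cast hu.symm)) by
      simpa using this (List.ofFn w) (List.length_ofFn)
    rintro u rfl
    simpa [HasNatDensity, Nat.count_eq_card_filter_range, window, funext_iff, wordWeight,
      Fin.prod_univ_fun_getElem u fun a => if a then p else 1 - p] using h u hL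
  · intro h u hu
    simpa [HasNatDensity, Nat.count_eq_card_filter_range, window, funext_iff, wordWeight,
      Fin.prod_univ_fun_getElem u fun a => if a then p else 1 - p] using h u.length hu u.get

theorem PostnikovAdmissible.hasNatDensity (h : PostnikovAdmissible p α) {m : ℕ}
    (R : Finset (Fin m)) :
    HasNatDensity (fun n => ∀ i ∈ R, α (n * m + i) = true) (p ^ R.card) := by
  rcases R.eq_empty_or_nonempty with rfl | hR
  · simpa using hasNatDensity_of_forall
      (P := fun n => ∀ i ∈ (∅ : Finset (Fin m)), α (n * m + i) = true) (by simp)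
  · simpa [HasNatDensity, Nat.count_eq_card_filter_range] using h m hR.choose.pos R hR

theorem PostnikovAdmissible.of_forall_hasNatDensity
    (h : ∀ m, 1 ≤ m → ∀ R : Finset (Fin m),
      HasNatDensity (fun n => ∀ i ∈ R, α (n * m + i) = true) (p ^ R.card)) :
    PostnikovAdmissible p α := fun m hm R _ => by
  simpa [HasNatDensity, Nat.count_eq_card_filter_range] using h m hm R

end Bridges

section PostnikovToNormal

variable {p : ℝ} {α : ℕ → Bool}

theorem PostnikovAdmissible.hasNatDensity_window (h : PostnikovAdmissible p α) {L m q : ℕ}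
    (hqm : q + L ≤ m) (w : Fin L → Bool) :
    HasNatDensity (fun n => window α L (n * m + q) = w) (wordWeight p w) :=
  hasNatDensity_eq_wordWeight _ (fun S => by
    simpa [window, add_assoc] using
      h.hasNatDensity (S.map ((Fin.natAddEmb q).trans (Fin.castLEEmb hqm)))) w

theorem PostnikovAdmissible.bernoulliNormal (h : PostnikovAdmissible p α) :
    BernoulliNormal p α :=
  bernoulliNormal_iff.2 fun L _ w => hasNatDensity_of_hasNatDensity_mul_add L fun _ _ hq =>
    h.hasNatDensity_window hq.le w

end PostnikovToNormal

section Variance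

variable {ι : Type*} [Fintype ι] [DecidableEq ι] {p : ℝ}

theorem sum_wordWeight_mul_sub_mul_sub (S S' : Finset ι) :
    ∑ w, wordWeight p w * ((onesIndicator S w - p ^ S.card) * (onesIndicator S' w - p ^ S'.card)) =
      p ^ (S ∪ S').card - p ^ S.card * p ^ S'.card := by
  have h : ∀ w, wordWeight p w * ((onesIndicator S w - p ^ S.card) *
      (onesIndicator S' w - p ^ S'.card)) =
        wordWeight p w * onesIndicator (S ∪ S') w
          - p ^ S'.card * (wordWeight p w * onesIndicator S w)
          - p ^ S.card * (wordWeight p w * onesIndicator S' w)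
          + p ^ S.card * p ^ S'.card * wordWeight p w := fun w => by
    rw [← onesIndicator_mul_onesIndicator]
    ring
  simp only [h, sum_add_distrib, sum_sub_distrib, ← mul_sum, sum_wordWeight_mul_onesIndicator,
    sum_wordWeight]
  ring

theorem sum_wordWeight_mul_mean_sub_sq {T k : ℕ} (hT : T ≠ 0) (S : Fin T → Finset ι)
    (hS : Pairwise (Disjoint on S)) (hk : ∀ t, (S t).card = k) :
    ∑ w, wordWeight p w * ((∑ t, onesIndicator (S t) w) / T - p ^ k) ^ 2 =
      (p ^ k - p ^ k * p ^ k) / T := by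
  have hcov : ∀ s t, ∑ w, wordWeight p w *
      ((onesIndicator (S s) w - p ^ k) * (onesIndicator (S t) w - p ^ k)) =
        if s = t then p ^ k - p ^ k * p ^ k else 0 := fun s t => by
    have h := sum_wordWeight_mul_sub_mul_sub (p := p) (S s) (S t)
    rw [hk, hk] at h
    rw [h]
    split_ifs with hst
    · rw [hst, union_self, hk]
    · rw [card_union_of_disjoint (hS hst), hk, hk, pow_add, sub_self]
  have hsq : ∀ w, ((∑ t, onesIndicator (S t) w) / T - p ^ k) ^ 2 =
      (∑ s, ∑ t, (onesIndicator (S s) w - p ^ k) * (onesIndicator (S t) w - p ^ k)) / T ^ 2 :=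
    fun w => by
      rw [← sum_mul_sum, ← sq, sum_sub_distrib, sum_const, card_univ, Fintype.card_fin,
        nsmul_eq_mul]
      field_simp
  simp only [hsq, mul_div_assoc', mul_sum, ← sum_div]
  rw [sum_comm]
  simp only [sum_comm (s := univ (α := ι → Bool)), hcov, sum_ite_eq, mem_univ, if_true, sum_const,
    card_univ, Fintype.card_fin, nsmul_eq_mul]
  field_simp

theorem sq_sum_wordWeight_mul_abs_le (hp0 : 0 ≤ p) (hp1 : p ≤ 1) (f : (ι → Bool) → ℝ) :
    (∑ w, wordWeight p w * |f w|) ^ 2 ≤ ∑ w, wordWeight p w * f w ^ 2 := by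
  simpa [sq_abs] using (convexOn_pow 2).map_sum_le (fun w _ => wordWeight_nonneg hp0 hp1 w)
    sum_wordWeight (fun w _ => abs_nonneg (f w))

end Variance

theorem abs_sum_range_sub_sum_range_add_le (f : ℕ → ℝ) (hf0 : ∀ n, 0 ≤ f n) (hf1 : ∀ n, f n ≤ 1)
    (N t : ℕ) : |∑ n ∈ range N, f n - ∑ n ∈ range N, f (n + t)| ≤ t := by
  have hsplit : ∑ n ∈ range N, f n + ∑ n ∈ range t, f (N + n) =
      ∑ n ∈ range t, f n + ∑ n ∈ range N, f (n + t) := by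
    rw [← sum_range_add]
    simp only [add_comm _ t]
    rw [← sum_range_add f t N]
  have hbound (g : ℕ → ℝ) (hg0 : ∀ n, 0 ≤ g n) (hg1 : ∀ n, g n ≤ 1) :
      0 ≤ ∑ n ∈ range t, g n ∧ ∑ n ∈ range t, g n ≤ t :=
    ⟨sum_nonneg fun n _ => hg0 n, by simpa using sum_le_card_nsmul (range t) g 1 fun n _ => hg1 n⟩
  obtain ⟨h₁, h₂⟩ := hbound f hf0 hf1
  obtain ⟨h₃, h₄⟩ := hbound (fun n => f (N + n)) (fun n => hf0 _) (fun n => hf1 _)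
  rw [abs_le]
  constructor <;> linarith

theorem sum_range_comp_eq_sum_mul_count {β : Type*} [Fintype β] [DecidableEq β] (g : ℕ → β)
    (H : β → ℝ) (N : ℕ) :
    ∑ n ∈ range N, H (g n) = ∑ b, H b * Nat.count (fun n => g n = b) N := by
  rw [← sum_fiberwise' (range N) g H]
  refine sum_congr rfl fun b _ => ?_
  rw [sum_const, nsmul_eq_mul, mul_comm, Nat.count_eq_card_filter_range]

section Blocks

variable {m : ℕ}

/-- The positions of `R` inside the `t`-th of `T` consecutive blocks of length `m`. -/
def blockSet {T : ℕ} (R : Finset (Fin m)) (t : Fin T) : Finset (Fin (T * m)) :=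
  R.map ((Embedding.sectR t (Fin m)).trans finProdFinEquiv.toEmbedding)

noncomputable def blockMean (T : ℕ) (R : Finset (Fin m)) (w : Fin (T * m) → Bool) : ℝ :=
  (∑ t : Fin T, onesIndicator (blockSet R t) w) / T

theorem card_blockSet {T : ℕ} (R : Finset (Fin m)) (t : Fin T) : (blockSet R t).card = R.card :=
  card_map _

theorem pairwise_disjoint_blockSet (T : ℕ) (R : Finset (Fin m)) :
    Pairwise (Disjoint on blockSet (T := T) R) := fun s t hst =>
  disjoint_left.2 fun j hs ht => by
    simp only [blockSet, Finset.mem_map, Embedding.trans_apply, Embedding.sectR_apply,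
      Equiv.toEmbedding_apply] at hs ht
    obtain ⟨i, -, rfl⟩ := hs
    obtain ⟨i', -, h⟩ := ht
    exact hst (congrArg Prod.fst (finProdFinEquiv.injective h)).symm

theorem blockMean_window (α : ℕ → Bool) (T : ℕ) (R : Finset (Fin m)) (n : ℕ) :
    blockMean T R (window α (T * m) (n * m)) =
      (∑ t : Fin T, if ∀ i ∈ R, α ((n + t) * m + i) = true then 1 else 0) / T := by
  have h (t : Fin T) (i : Fin m) : n * m + (i + m * t) = (n + t) * m + i := by ring
  simp only [blockMean, onesIndicator, blockSet, forall_mem_map, Embedding.trans_apply,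
    Embedding.sectR_apply, Equiv.toEmbedding_apply, window, finProdFinEquiv_apply_val, h]

theorem sq_sum_wordWeight_mul_abs_blockMean_sub_le {p : ℝ} (hp0 : 0 ≤ p) (hp1 : p ≤ 1) {T : ℕ}
    (hT : T ≠ 0) (R : Finset (Fin m)) :
    (∑ w, wordWeight p w * |blockMean T R w - p ^ R.card|) ^ 2 ≤ 1 / T := by
  have hc0 : 0 ≤ p ^ R.card := pow_nonneg hp0 _
  have hc1 : p ^ R.card ≤ 1 := pow_le_one₀ hp0 hp1
  calc _ ≤ ∑ w, wordWeight p w * (blockMean T R w - p ^ R.card) ^ 2 :=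
        sq_sum_wordWeight_mul_abs_le hp0 hp1 _
    _ = (p ^ R.card - p ^ R.card * p ^ R.card) / T :=
        sum_wordWeight_mul_mean_sub_sq hT _ (pairwise_disjoint_blockSet T R) (card_blockSet R)
    _ ≤ 1 / T := by gcongr; nlinarith

theorem exists_sum_abs_blockMean_sub_mul_lt {p : ℝ} (hp0 : 0 ≤ p) (hp1 : p ≤ 1)
    (R : Finset (Fin m)) {ε : ℝ} (hε : 0 < ε) :
    ∃ T ≠ 0, ∑ w, |blockMean T R w - p ^ R.card| * (wordWeight p w * m) < ε := by
  obtain ⟨T, hTε, hT⟩ : ∃ T : ℕ, (m : ℝ) ^ 2 / T < ε ^ 2 ∧ T ≠ 0 :=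
    (((tendsto_const_div_atTop_nhds_zero_nat _).eventually (gt_mem_nhds (by positivity))).and
      (eventually_ne_atTop 0)).exists
  refine ⟨T, hT, lt_of_pow_lt_pow_left₀ 2 hε.le ?_⟩
  calc (∑ w, |blockMean T R w - p ^ R.card| * (wordWeight p w * m)) ^ 2
      = (m : ℝ) ^ 2 * (∑ w, wordWeight p w * |blockMean T R w - p ^ R.card|) ^ 2 := by
        rw [← mul_pow, mul_sum]
        exact congrArg (· ^ 2) (sum_congr rfl fun w _ => by ring)
    _ ≤ (m : ℝ) ^ 2 * (1 / T) := by
        gcongr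
        exact sq_sum_wordWeight_mul_abs_blockMean_sub_le hp0 hp1 hT R
    _ < ε ^ 2 := by rwa [mul_one_div]

end Blocks

theorem abs_count_sub_sum_blockMean_window_le (α : ℕ → Bool) {m T : ℕ} (hT : T ≠ 0)
    (R : Finset (Fin m)) (N : ℕ) :
    |(Nat.count (fun n => ∀ i ∈ R, α (n * m + i) = true) N : ℝ) -
      ∑ n ∈ range N, blockMean T R (window α (T * m) (n * m))| ≤ T := by
  set x : ℕ → ℝ := fun n => if ∀ i ∈ R, α (n * m + i) = true then 1 else 0
  have h : (Nat.count (fun n => ∀ i ∈ R, α (n * m + i) = true) N : ℝ) -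
      ∑ n ∈ range N, blockMean T R (window α (T * m) (n * m)) =
        (∑ t : Fin T, (∑ n ∈ range N, x n - ∑ n ∈ range N, x (n + t))) / T := by
    simp only [blockMean_window, ← sum_div, Nat.count_eq_card_filter_range, natCast_card_filter]
    rw [sum_comm, sum_sub_distrib, sum_const, card_univ, Fintype.card_fin, nsmul_eq_mul]
    field_simp
    simp only [x, add_mul]
    ring
  rw [h, abs_div, Nat.abs_cast, div_le_iff₀ (by positivity)]
  calc _ ≤ ∑ t : Fin T, |∑ n ∈ range N, x n - ∑ n ∈ range N, x (n + t)| := abs_sum_le_sum_abs _ _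
    _ ≤ ∑ t : Fin T, (T : ℝ) := sum_le_sum fun t _ =>
      (abs_sum_range_sub_sum_range_add_le x (fun n => by positivity)
        (fun n => by simp only [x]; split <;> norm_num) N t).trans (mod_cast t.2.le)
    _ = T * T := by simp

theorem abs_count_sub_le (α : ℕ → Bool) {m T : ℕ} (hm : 0 < m) (hT : T ≠ 0)
    (R : Finset (Fin m)) (c : ℝ) (N : ℕ) :
    |(Nat.count (fun n => ∀ i ∈ R, α (n * m + i) = true) N : ℝ) - N * c| ≤
      T + ∑ w, |blockMean T R w - c| * Nat.count (fun i => window α (T * m) i = w) (N * m) := by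
  have hfiber : |∑ n ∈ range N, blockMean T R (window α (T * m) (n * m)) - N * c| ≤
      ∑ w, |blockMean T R w - c| * Nat.count (fun n => window α (T * m) (n * m) = w) N := by
    rw [← sum_range_comp_eq_sum_mul_count _ (fun w => |blockMean T R w - c|)]
    calc _ = |∑ n ∈ range N, (blockMean T R (window α (T * m) (n * m)) - c)| := by
          simp [sum_sub_distrib]
      _ ≤ _ := abs_sum_le_sum_abs _ _
  calc _ ≤ T + ∑ w, |blockMean T R w - c| * Nat.count (fun n => window α (T * m) (n * m) = w) N :=
        (abs_sub_le _ _ _).trans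
          (add_le_add (abs_count_sub_sum_blockMean_window_le α hT R N) hfiber)
    _ ≤ _ := by
        gcongr with w
        exact_mod_cast Nat.count_comp_mul_le_count_mul (fun i => window α (T * m) i = w) hm N

theorem BernoulliNormal.postnikovAdmissible {p : ℝ} {α : ℕ → Bool} (hp0 : 0 ≤ p) (hp1 : p ≤ 1)
    (h : BernoulliNormal p α) : PostnikovAdmissible p α := by
  refine PostnikovAdmissible.of_forall_hasNatDensity fun m hm R =>
    tendsto_of_forall_sandwich fun ε hε => ?_
  obtain ⟨T, hT, hE⟩ := exists_sum_abs_blockMean_sub_mul_lt hp0 hp1 R hε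
  set E := ∑ w, |blockMean T R w - p ^ R.card| * (wordWeight p w * m)
  set r : ℕ → ℝ := fun N => T / N + ∑ w, |blockMean T R w - p ^ R.card| *
    ((Nat.count (fun i => window α (T * m) i = w) (N * m) : ℝ) / N)
  have hr : Tendsto r atTop (𝓝 (0 + E)) :=
    (tendsto_const_div_atTop_nhds_zero_nat _).add (tendsto_finsetSum _ fun w _ =>
      ((bernoulliNormal_iff.1 h _ (Nat.mul_pos (Nat.pos_of_ne_zero hT) hm) w).tendsto_count_comp
        (tendsto_atTop_mono (fun N => Nat.le_mul_of_pos_right N hm) tendsto_id)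
        (tendsto_natCast_mul_div_atTop m)).const_mul _)
  refine ⟨fun N => p ^ R.card - r N, fun N => p ^ R.card + r N, p ^ R.card - (0 + E),
    p ^ R.card + (0 + E), tendsto_const_nhds.sub hr, tendsto_const_nhds.add hr,
    by linarith, by linarith, ?_⟩
  filter_upwards [eventually_gt_atTop 0] with N hN
  have hN : (0 : ℝ) < N := by positivity
  have hdiv : (Nat.count (fun n => ∀ i ∈ R, α (n * m + i) = true) N : ℝ) / N - p ^ R.card =
      ((Nat.count (fun n => ∀ i ∈ R, α (n * m + i) = true) N : ℝ) - N * p ^ R.card) / N := by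
    field_simp
  have key : |(Nat.count (fun n => ∀ i ∈ R, α (n * m + i) = true) N : ℝ) / N - p ^ R.card|
      ≤ r N := by
    rw [hdiv, abs_div, Nat.abs_cast]
    calc _ ≤ (T + ∑ w, |blockMean T R w - p ^ R.card| *
            Nat.count (fun i => window α (T * m) i = w) (N * m)) / N := by
          gcongr
          exact abs_count_sub_le α hm hT R _ N
      _ = r N := by simp only [r, add_div, sum_div, mul_div_assoc]
  constructor <;> linarith [abs_le.1 key]

/-- A sequence `α ∈ {0,1}^ω` is Bernoulli-normal if and only if it is Postnikov-admissible. -/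
theorem bernoulliNormal_iff_postnikovAdmissible
    (p : ℝ) (hp0 : 0 < p) (hp1 : p < 1) (α : ℕ → Bool) :
    BernoulliNormal p α ↔ PostnikovAdmissible p α :=
  ⟨BernoulliNormal.postnikovAdmissible hp0.le hp1.le, PostnikovAdmissible.bernoulliNormal⟩
end

section
/- A sequence α ∈ {0,1}^ω is Bernoulli-normal if and only if it is a Postnikova-kollektiv. -/
open Filter

/-- The limiting frequency of `1` (i.e. `true`) in the sequence `β` exists and equals `p`. -/
def Freq1 (β : ℕ → Bool) (p : ℝ) : Prop :=
  Tendsto (fun N : ℕ =>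
    (((Finset.range N).filter fun j => β j = true).card : ℝ) / N) atTop (nhds p)

/-- `w` occurs as a factor of `α` starting at position `i`. -/
def OccursAt (α : ℕ → Bool) (w : List Bool) (i : ℕ) : Prop :=
  ∀ j : Fin w.length, α (i + (j : ℕ)) = w.get j

/-- `α` is a Postnikova-kollektiv: (1) the limiting frequency of ones in `α` is `p`, and
(2) for every nonempty finite word `w`, `w` occurs infinitely often as a factor of `α`, and the
subsequence of symbols immediately following each occurrence of `w` (in order) has limiting
frequency of ones equal to `p`. -/
def PostnikovaKollektiv (p : ℝ) (α : ℕ → Bool) : Prop :=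
  Freq1 α p ∧
  ∀ w : List Bool, 1 ≤ w.length →
    {i : ℕ | OccursAt α w i}.Infinite ∧
    Freq1 (fun n => α (Nat.nth (OccursAt α w) n + w.length)) p

/-! Let `S_w` be the set of occurrences of `w`. The occurrences of `w ++ [1]` before the `n`-th
occurrence of `w` are counted by the ones among the first `n` symbols following `w`, so if `S_w`
has density `c > 0`, then `S_{w ++ [1]}` has density `c * q` exactly when those symbols have
frequency `q`. Normality therefore gives `q = μ_p(w ++ [1]) / μ_p(w) = p`; conversely, the
kollektiv property gives the density `μ_p(w) * p` of `S_{w ++ [1]}` by induction on `w`, and that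
of `S_{w ++ [0]} = S_w \ S_{w ++ [1]}` by subtraction. Both properties hold trivially for the
empty word, with `freq_1(α) = p` as the frequency after it, which makes the induction uniform. -/

open Nat Topology

instance (α : ℕ → Bool) (w : List Bool) : DecidablePred (OccursAt α w) :=
  fun i => inferInstanceAs (Decidable (∀ j : Fin w.length, α (i + (j : ℕ)) = w.get j))

def HasDensity (S : ℕ → Prop) [DecidablePred S] (c : ℝ) : Prop :=
  Tendsto (fun N : ℕ => (count S N : ℝ) / N) atTop (𝓝 c)

section Density

variable {S Q : ℕ → Prop} [DecidablePred S] [DecidablePred Q] {c d q : ℝ}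

lemma hasDensity_iff_tendsto_card :
    HasDensity S c ↔
      Tendsto (fun N : ℕ => (((Finset.range N).filter S).card : ℝ) / N) atTop (𝓝 c) := by
  simp only [HasDensity, count_eq_card_filter_range]

lemma hasDensity_congr {T : ℕ → Prop} [DecidablePred T] (h : ∀ i, S i ↔ T i) :
    HasDensity S c ↔ HasDensity T c := by
  simp only [hasDensity_iff_tendsto_card, Finset.filter_congr fun i _ => h i]

lemma hasDensity_of_forall (h : ∀ i, S i) : HasDensity S 1 := by
  refine tendsto_const_nhds.congr' ?_
  filter_upwards [eventually_gt_atTop 0] with N hN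
  rw [count_of_forall fun i _ => h i, div_self (by positivity)]

lemma HasDensity.infinite (h : HasDensity S c) (hc : c ≠ 0) : {i | S i}.Infinite := by
  intro hfin
  have h0 : HasDensity S 0 :=
    squeeze_zero (g := fun N : ℕ => (hfin.toFinset.card : ℝ) / N) (fun N => by positivity)
      (fun N => div_le_div_of_nonneg_right
        (by exact_mod_cast count_le_card (p := S) hfin N) N.cast_nonneg)
      (tendsto_const_div_atTop_nhds_zero_nat _)
  exact hc (tendsto_nhds_unique h h0)

lemma count_and_not_add_count_and (M : ℕ) :
    count (fun i => S i ∧ ¬Q i) M + count (fun i => S i ∧ Q i) M = count S M := by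
  induction M with
  | zero => simp
  | succ M ih =>
    by_cases hS : S M <;> by_cases hQ : Q M <;> simp [count_succ, hS, hQ, ← ih] <;> omega

lemma HasDensity.and_not (hS : HasDensity S c) (hSQ : HasDensity (fun i => S i ∧ Q i) d) :
    HasDensity (fun i => S i ∧ ¬Q i) (c - d) :=
  (hS.sub hSQ).congr fun N => by
    rw [← sub_div, ← count_and_not_add_count_and (Q := Q), Nat.cast_add, add_sub_cancel_right]

lemma count_and_eq_count_comp_nth (M : ℕ) :
    count (fun i => S i ∧ Q i) M = count (fun n => Q (nth S n)) (count S M) := by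
  induction M with
  | zero => simp
  | succ M ih =>
    by_cases hM : S M
    · simp [count_succ, ih, hM, nth_count hM]
    · simp [count_succ, ih, hM]

lemma tendsto_count_atTop (hS : {i | S i}.Infinite) : Tendsto (count S) atTop atTop :=
  tendsto_atTop_atTop_of_monotone (count_monotone S) fun n =>
    ⟨nth S n, (count_nth_of_infinite hS n).ge⟩

lemma HasDensity.and_of_comp_nth (hS : HasDensity S c) (hinf : {i | S i}.Infinite)
    (hQ : HasDensity (fun n => Q (nth S n)) q) : HasDensity (fun i => S i ∧ Q i) (c * q) := by
  rw [mul_comm]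
  refine ((hQ.comp (tendsto_count_atTop hinf)).mul hS).congr' ?_
  filter_upwards [(tendsto_count_atTop hinf).eventually_gt_atTop 0] with M hM
  rw [Function.comp_apply, div_mul_div_cancel₀ (by positivity), count_and_eq_count_comp_nth]

lemma HasDensity.comp_nth_of_and (hS : HasDensity S c) (hc : c ≠ 0)
    (hSQ : HasDensity (fun i => S i ∧ Q i) (c * q)) : HasDensity (fun n => Q (nth S n)) q := by
  have hinf := hS.infinite hc
  have hratio := (hSQ.div hS hc).comp (nth_strictMono hinf).tendsto_atTop
  rw [mul_div_cancel_left₀ q hc] at hratio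
  refine hratio.congr' ?_
  filter_upwards [eventually_gt_atTop 0] with n hn
  have hpos : (0 : ℝ) < nth S n := by exact_mod_cast hn.trans_le ((nth_strictMono hinf).id_le n)
  simp only [Function.comp_apply, Pi.div_apply]
  rw [div_div_div_cancel_right₀ hpos.ne', count_and_eq_count_comp_nth,
    count_nth_of_infinite hinf]

lemma HasDensity.and_iff_comp_nth (hS : HasDensity S c) (hc : c ≠ 0) :
    HasDensity (fun i => S i ∧ Q i) (c * q) ↔ HasDensity (fun n => Q (nth S n)) q :=
  ⟨hS.comp_nth_of_and hc, hS.and_of_comp_nth (hS.infinite hc)⟩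

end Density

def bernoulliWeight (p : ℝ) (w : List Bool) : ℝ :=
  (w.map fun a => if a then p else 1 - p).prod

@[simp]
lemma bernoulliWeight_nil (p : ℝ) : bernoulliWeight p [] = 1 := rfl

@[simp]
lemma bernoulliWeight_append_singleton (p : ℝ) (w : List Bool) (b : Bool) :
    bernoulliWeight p (w ++ [b]) = bernoulliWeight p w * if b then p else 1 - p := by
  simp [bernoulliWeight]

lemma bernoulliWeight_pos {p : ℝ} (hp0 : 0 < p) (hp1 : p < 1) (w : List Bool) :
    0 < bernoulliWeight p w :=
  List.prod_pos fun x hx => by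
    obtain ⟨a, -, rfl⟩ := List.mem_map.mp hx
    cases a <;> simp [hp0, hp1]

section OccursAt

variable (α : ℕ → Bool)

lemma occursAt_nil (i : ℕ) : OccursAt α [] i :=
  fun j => j.elim0

lemma occursAt_append_singleton (w : List Bool) (b : Bool) (i : ℕ) :
    OccursAt α (w ++ [b]) i ↔ OccursAt α w i ∧ α (i + w.length) = b := by
  simp only [OccursAt, Fin.forall_iff, List.length_append, List.length_singleton,
    Nat.forall_lt_succ_right', List.get_eq_getElem, List.getElem_concat_length]
  simp +contextual [List.getElem_append_left]

lemma nth_occursAt_nil (n : ℕ) : nth (OccursAt α []) n = n := by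
  simp [show OccursAt α [] = fun _ => True from funext fun i => eq_true (occursAt_nil α i)]

lemma freq1_iff_hasDensity (p : ℝ) : Freq1 α p ↔ HasDensity (fun n => α n = true) p :=
  hasDensity_iff_tendsto_card.symm

lemma bernoulliNormal_iff_forall_hasDensity (p : ℝ) :
    BernoulliNormal p α ↔ ∀ w, HasDensity (OccursAt α w) (bernoulliWeight p w) := by
  refine ⟨fun h w => ?_, fun h w _ => hasDensity_iff_tendsto_card.1 (h w)⟩
  cases w with
  | nil => exact hasDensity_of_forall (occursAt_nil α)
  | cons a w => exact hasDensity_iff_tendsto_card.2 (h _ (by simp))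

lemma postnikovaKollektiv_iff_forall (p : ℝ) :
    PostnikovaKollektiv p α ↔ ∀ w, {i | OccursAt α w i}.Infinite ∧
      HasDensity (fun n => α (nth (OccursAt α w) n + w.length) = true) p := by
  simp only [PostnikovaKollektiv, ← freq1_iff_hasDensity]
  refine ⟨fun ⟨h₁, h⟩ w => ?_, fun h => ⟨?_, fun w _ => h w⟩⟩
  · cases w with
    | nil =>
      exact ⟨(hasDensity_of_forall (occursAt_nil α)).infinite one_ne_zero,
        by simpa [nth_occursAt_nil] using h₁⟩
    | cons a w => exact h _ (by simp)
  · simpa [nth_occursAt_nil] using (h []).2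

end OccursAt

/-- A sequence `α ∈ {0,1}^ω` is Bernoulli-normal if and only if it is a Postnikova-kollektiv. -/
theorem bernoulliNormal_iff_postnikovaKollektiv
    (p : ℝ) (hp0 : 0 < p) (hp1 : p < 1) (α : ℕ → Bool) :
    BernoulliNormal p α ↔ PostnikovaKollektiv p α := by
  rw [bernoulliNormal_iff_forall_hasDensity, postnikovaKollektiv_iff_forall]
  have hμ := bernoulliWeight_pos hp0 hp1
  constructor
  · intro h w
    have hw := h w
    refine ⟨hw.infinite (hμ w).ne',
      (hw.and_iff_comp_nth (Q := fun i => α (i + w.length) = true) (hμ w).ne').1 ?_⟩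
    have htrue := h (w ++ [true])
    rwa [bernoulliWeight_append_singleton, if_pos rfl,
      hasDensity_congr (occursAt_append_singleton α w true)] at htrue
  · intro h w
    induction w using List.reverseRecOn with
    | nil => simpa using hasDensity_of_forall (occursAt_nil α)
    | append_singleton w b ih =>
      have htrue :=
        (ih.and_iff_comp_nth (Q := fun i => α (i + w.length) = true) (hμ w).ne').2 (h w).2
      rw [hasDensity_congr (occursAt_append_singleton α w b), bernoulliWeight_append_singleton]
      cases b
      · rw [if_neg Bool.false_ne_true, mul_one_sub]
        exact (hasDensity_congr fun i => by rw [Bool.not_eq_true]).1 (ih.and_not htrue)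
      · rwa [if_pos rfl]
end

section
/- Let p be a positive Bernoulli distribution on {0,1}, let S ⊆ {0,1}* be a strategy, and let F be a finite subset of {0,1}*. Let R = F \ { w : there exists u ∈ F with u a proper prefix of w } be the set obtained from F by removing words that already have a proper prefix in F. For each positive integer n define M_n = { w ∈ {0,1}^n : S(w) ∈ F }. Then μ_p(M_n) ≤ μ_p(R). -/
open Filter
open scoped Classical

/-- `μ_p(w)`: the probability of the finite word `w` under the Bernoulli distribution `p`. -/
def wordProb (p : Bool → ℝ) (w : List Bool) : ℝ := (w.map p).prod

/-- The word selected from `w` by the strategy `S ⊆ {0,1}*`: the symbols `w_j` (in order)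
such that the prefix `w_1 … w_(j-1)` belongs to `S`. -/
noncomputable def selectWord (S : Set (List Bool)) (w : List Bool) : List Bool :=
  (List.finRange w.length).filterMap fun (j : Fin w.length) =>
    if w.take (j : ℕ) ∈ S then some (w.get j) else none

/-! Every word of `F` has a prefix in `R`, namely its shortest prefix lying in `F`, so `M_n` is
covered by the events `{w : r is a prefix of S(w)}` for `r ∈ R`. Each such event has mass at most
`μ_p(r)`, by induction on `n`: if the empty history is not in `S` the first symbol is skipped and
we recurse with the shifted strategy `{u | a :: u ∈ S}`; otherwise the first symbol is selected,
must equal the first letter of `r`, and contributes exactly the factor `p(r₁)`. -/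

theorem selectWord_nil (S : Set (List Bool)) : selectWord S [] = [] := rfl

theorem selectWord_cons (S : Set (List Bool)) (a : Bool) (v : List Bool) :
    selectWord S (a :: v) = (if [] ∈ S then [a] else []) ++ selectWord {u | a :: u ∈ S} v := by
  unfold selectWord
  simp only [List.length_cons]
  rw [List.finRange_succ, List.filterMap_cons, List.filterMap_map]
  by_cases h : [] ∈ S <;> simp [h, Function.comp_def, List.take_succ_cons] <;> congr

def prefixMinimals {α : Type*} [DecidableEq α] (F : Finset (List α)) : Finset (List α) :=
  F.filter fun w => ¬ ∃ u ∈ F, u <+: w ∧ u ≠ w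

theorem exists_mem_prefixMinimals_prefix {α : Type*} [DecidableEq α] {F : Finset (List α)}
    {w : List α} (hw : w ∈ F) : ∃ r ∈ prefixMinimals F, r <+: w := by
  obtain ⟨r, hr, hmin⟩ := (F.filter (· <+: w)).exists_min_image List.length ⟨w, by simp [hw]⟩
  rw [Finset.mem_filter] at hr
  refine ⟨r, Finset.mem_filter.mpr ⟨hr.1, ?_⟩, hr.2⟩
  rintro ⟨u, hu, hur, hne⟩
  have hlt : u.length < r.length := lt_of_le_of_ne hur.length_le (mt hur.eq_of_length hne)
  exact hlt.not_ge (hmin u (Finset.mem_filter.mpr ⟨hu, hur.trans hr.2⟩))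

/-- `μ_p {w ∈ {0,1}ⁿ | E w}`. -/
noncomputable def wordMass (p : Bool → ℝ) (n : ℕ) (E : List Bool → Prop) : ℝ :=
  ∑ w : Fin n → Bool, if E (List.ofFn w) then wordProb p (List.ofFn w) else 0

section

variable (p : Bool → ℝ)

theorem wordProb_nil : wordProb p [] = 1 := rfl

theorem wordProb_cons (a : Bool) (v : List Bool) :
    wordProb p (a :: v) = p a * wordProb p v := rfl

theorem wordProb_nonneg (hp : ∀ a, 0 ≤ p a) (w : List Bool) : 0 ≤ wordProb p w :=
  List.prod_nonneg fun _ hx => by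
    obtain ⟨a, -, rfl⟩ := List.mem_map.mp hx
    exact hp a

theorem wordMass_eq_sum (n : ℕ) (E : List Bool → Prop) [DecidablePred E] :
    wordMass p n E =
      ∑ w : Fin n → Bool, if E (List.ofFn w) then wordProb p (List.ofFn w) else 0 := by
  unfold wordMass
  congr!

theorem wordMass_zero (E : List Bool → Prop) : wordMass p 0 E = if E [] then 1 else 0 := by
  simp [wordMass, wordProb_nil]

theorem wordMass_succ (n : ℕ) (E : List Bool → Prop) :
    wordMass p (n + 1) E = ∑ a, p a * wordMass p n (fun v => E (a :: v)) := by
  simp only [wordMass, ← (Fin.consEquiv fun _ => Bool).sum_comp, Fintype.sum_prod_type,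
    Finset.mul_sum, mul_ite, mul_zero]
  simp [List.ofFn_succ, wordProb_cons]

theorem wordMass_mono (hp : ∀ a, 0 ≤ p a) (n : ℕ) {E E' : List Bool → Prop}
    (h : ∀ v, E v → E' v) : wordMass p n E ≤ wordMass p n E' :=
  Finset.sum_le_sum fun w _ => by
    by_cases hE : E (List.ofFn w)
    · simp [hE, h _ hE]
    · simp [hE, apply_ite, wordProb_nonneg p hp]

theorem wordMass_exists_le_sum (hp : ∀ a, 0 ≤ p a) (n : ℕ) {ι : Type*} (s : Finset ι)
    (E : ι → List Bool → Prop) :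
    wordMass p n (fun v => ∃ i ∈ s, E i v) ≤ ∑ i ∈ s, wordMass p n (E i) := by
  unfold wordMass
  rw [Finset.sum_comm]
  refine Finset.sum_le_sum fun w _ => ?_
  have hterm : ∀ i ∈ s, 0 ≤ if E i (List.ofFn w) then wordProb p (List.ofFn w) else 0 :=
    fun _ _ => by split_ifs <;> simp [wordProb_nonneg p hp]
  split_ifs with h
  · obtain ⟨i, hi, hE⟩ := h
    simpa [hE] using Finset.single_le_sum hterm hi
  · exact Finset.sum_nonneg hterm

theorem wordMass_le_one (hp : ∀ a, 0 ≤ p a) (hsum : p false + p true = 1) (n : ℕ)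
    (E : List Bool → Prop) : wordMass p n E ≤ 1 := by
  induction n generalizing E with
  | zero => rw [wordMass_zero]; split_ifs <;> norm_num
  | succ n ih =>
    calc wordMass p (n + 1) E ≤ ∑ a, p a * 1 := by
          rw [wordMass_succ]
          exact Finset.sum_le_sum fun a _ => mul_le_mul_of_nonneg_left (ih _) (hp a)
      _ = 1 := by simp [add_comm, hsum]

theorem wordMass_prefix_selectWord_le (hp : ∀ a, 0 ≤ p a) (hsum : p false + p true = 1)
    (n : ℕ) (S : Set (List Bool)) (r : List Bool) :
    wordMass p n (fun v => r <+: selectWord S v) ≤ wordProb p r := by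
  induction n generalizing S r with
  | zero =>
    rw [wordMass_zero, selectWord_nil, List.prefix_nil]
    split_ifs with hr
    · rw [hr, wordProb_nil]
    · exact wordProb_nonneg p hp r
  | succ n ih =>
    rcases r with _ | ⟨b, r⟩
    · exact (wordMass_le_one p hp hsum _ _).trans_eq (wordProb_nil p).symm
    simp only [wordMass_succ, selectWord_cons]
    by_cases hS : [] ∈ S
    · simp only [if_pos hS, List.singleton_append, List.cons_prefix_cons]
      rw [Fintype.sum_eq_single b fun a hab => by simp [wordMass, Ne.symm hab], wordProb_cons]
      simpa using mul_le_mul_of_nonneg_left (ih _ _) (hp b)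
    · simp only [if_neg hS, List.nil_append]
      calc _ ≤ ∑ a, p a * wordProb p (b :: r) :=
            Finset.sum_le_sum fun a _ => mul_le_mul_of_nonneg_left (ih _ _) (hp a)
        _ = wordProb p (b :: r) := by rw [← Finset.sum_mul]; simp [add_comm, hsum]

end

theorem mu_select_mem_le_general (p : Bool → ℝ) (hpos : ∀ a, 0 < p a)
    (hsum : p false + p true = 1)
    (S : Set (List Bool)) (F : Finset (List Bool)) (n : ℕ) :
    (∑ w : Fin n → Bool,
        if selectWord S (List.ofFn w) ∈ F then wordProb p (List.ofFn w) else 0) ≤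
      ∑ u ∈ F.filter (fun w => ¬ ∃ u ∈ F, u <+: w ∧ u ≠ w), wordProb p u := by
  have hp : ∀ a, 0 ≤ p a := fun a => (hpos a).le
  rw [← wordMass_eq_sum p n (fun v => selectWord S v ∈ F)]
  calc wordMass p n (fun v => selectWord S v ∈ F)
      ≤ wordMass p n (fun v => ∃ r ∈ prefixMinimals F, r <+: selectWord S v) :=
        wordMass_mono p hp n fun _ => exists_mem_prefixMinimals_prefix
    _ ≤ ∑ r ∈ prefixMinimals F, wordMass p n (fun v => r <+: selectWord S v) :=
        wordMass_exists_le_sum p hp n _ _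
    _ ≤ ∑ r ∈ prefixMinimals F, wordProb p r :=
        Finset.sum_le_sum fun r _ => wordMass_prefix_selectWord_le p hp hsum n S r

/-- Let `R` be obtained from the finite set `F` by removing all words that already have a
proper prefix in `F`, and let `M_n = {w ∈ {0,1}^n : S(w) ∈ F}`.  Then `μ_p(M_n) ≤ μ_p(R)`. -/
theorem mu_select_mem_le (p : Bool → ℝ) (hpos : ∀ a, 0 < p a)
    (hsum : p false + p true = 1)
    (S : Set (List Bool)) (F : Finset (List Bool)) (n : ℕ) (hn : 0 < n) :
    (∑ w : Fin n → Bool,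
        if selectWord S (List.ofFn w) ∈ F then wordProb p (List.ofFn w) else 0) ≤
      ∑ u ∈ F.filter (fun w => ¬ ∃ u ∈ F, u <+: w ∧ u ≠ w), wordProb p u :=
  mu_select_mem_le_general p hpos hsum S F n
end
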